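/- The truncated octahedron graph admits an embedding with scale 1 into ℤ^6 in which every coordinate of the image of every vertex lies in {0,1} (i.e., the truncated octahedron embeds isometrically into the hypercube H_6). -/

import Mathlib

/-- The vertices of the truncated octahedron: the 24 points of `ℤ^3` that are
coordinate permutations of `(0, ±1, ±2)`. -/
def TrOctaVertex (v : Fin 3 → ℤ) : Prop :=
  ∃ σ : Equiv.Perm (Fin 3), v (σ 0) = 0 ∧ |v (σ 1)| = 1 ∧ |v (σ 2)| = 2

/-- The truncated octahedron graph: vertices as above, adjacent iff the squared
Euclidean distance equals 2. -/
def truncatedOctahedronGraph : SimpleGraph {v : Fin 3 → ℤ // TrOctaVertex v} :=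
  SimpleGraph.fromRel (fun v w => ∑ i, (v.val i - w.val i) ^ 2 = 2)

instance : DecidablePred TrOctaVertex := fun v => by
  unfold TrOctaVertex; infer_instance

/-- The explicit list of the 24 vertices. -/
def vertL : List (Fin 3 → ℤ) :=
  [![-2,-1,0], ![-2,0,-1], ![-2,0,1], ![-2,1,0], ![-1,-2,0], ![-1,0,-2],
   ![-1,0,2], ![-1,2,0], ![0,-2,-1], ![0,-2,1], ![0,-1,-2], ![0,-1,2],
   ![0,1,-2], ![0,1,2], ![0,2,-1], ![0,2,1], ![1,-2,0], ![1,0,-2],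
   ![1,0,2], ![1,2,0], ![2,-1,0], ![2,0,-1], ![2,0,1], ![2,1,0]]

/-- The hypercube embedding: each coordinate is the indicator of a linear form. -/
def emb (v : Fin 3 → ℤ) : Fin 6 → ℤ :=
  ![if 0 ≤ -v 0 + 3 * v 1 - 3 * v 2 then 1 else 0,
    if 0 ≤ -v 0 + 3 * v 1 + 3 * v 2 then 1 else 0,
    if 0 ≤ v 0 - v 1 then 1 else 0,
    if 0 ≤ v 0 - v 2 then 1 else 0,
    if 0 ≤ v 0 + v 2 then 1 else 0,
    if 0 ≤ v 0 + v 1 then 1 else 0]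

def E3 (u v : Fin 3 → ℤ) : ℤ :=
  (u 0 - v 0)^2 + (u 1 - v 1)^2 + (u 2 - v 2)^2

def E6 (u v : Fin 3 → ℤ) : ℤ :=
  |emb u 0 - emb v 0| + |emb u 1 - emb v 1| + |emb u 2 - emb v 2| +
  |emb u 3 - emb v 3| + |emb u 4 - emb v 4| + |emb u 5 - emb v 5|

theorem vertL_trOcta : ∀ v ∈ vertL, TrOctaVertex v := by decide

theorem mem_vertL {v : Fin 3 → ℤ} (hv : TrOctaVertex v) : v ∈ vertL := by
  obtain ⟨σ, h0, h1, h2⟩ := hv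
  have hv3 : v = ![v 0, v 1, v 2] := by
    funext i; fin_cases i <;> rfl
  have key : ∀ x : Fin 3, x = 0 ∨ x = 1 ∨ x = 2 := by decide
  have inj := σ.injective
  rw [abs_eq (by norm_num : (0:ℤ) ≤ 1)] at h1
  rw [abs_eq (by norm_num : (0:ℤ) ≤ 2)] at h2
  rcases key (σ 0) with ha|ha|ha <;> rcases key (σ 1) with hb|hb|hb <;>
    rcases key (σ 2) with hc|hc|hc <;>
    first
      | (exact absurd (inj (ha.trans hb.symm)) (by decide))
      | (exact absurd (inj (ha.trans hc.symm)) (by decide))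
      | (exact absurd (inj (hb.trans hc.symm)) (by decide))
      | (rw [ha] at h0; rw [hb] at h1; rw [hc] at h2;
         rw [hv3];
         rcases h1 with h1|h1 <;> rcases h2 with h2|h2 <;>
           rw [h0, h1, h2] <;> simp [vertL])

theorem edgeE : ∀ u ∈ vertL, ∀ v ∈ vertL, E3 u v = 2 → E6 u v = 1 := by decide

theorem stepE : ∀ u ∈ vertL, ∀ v ∈ vertL, E6 u v ≠ 0 →
    ∃ w ∈ vertL, E3 u w = 2 ∧ E6 w v + 1 = E6 u v := by decide

theorem injE : ∀ u ∈ vertL, ∀ v ∈ vertL, E6 u v = 0 → u = v := by decide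

theorem E3_symm (u v : Fin 3 → ℤ) : E3 u v = E3 v u := by unfold E3; ring

theorem sum_sq_eq_E3 (u v : Fin 3 → ℤ) :
    ∑ i, (u i - v i) ^ 2 = E3 u v := by
  rw [Fin.sum_univ_three]; rfl

theorem sum_abs_eq_E6 (u v : Fin 3 → ℤ) :
    ∑ i, |emb u i - emb v i| = E6 u v := by
  rw [Fin.sum_univ_six]; rfl

theorem E6_nonneg (u v : Fin 3 → ℤ) : 0 ≤ E6 u v := by
  unfold E6; positivity

theorem E6_self (u : Fin 3 → ℤ) : E6 u u = 0 := by
  unfold E6; simp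

theorem E3_ne_of_eq_two {u v : Fin 3 → ℤ} (h : E3 u v = 2) : u ≠ v := by
  rintro rfl
  unfold E3 at h
  simp at h

abbrev TOV := {v : Fin 3 → ℤ // TrOctaVertex v}

theorem adj_of_E3 {u v : TOV} (h : E3 u.val v.val = 2) :
    truncatedOctahedronGraph.Adj u v := by
  rw [truncatedOctahedronGraph, SimpleGraph.fromRel_adj]
  refine ⟨fun he => E3_ne_of_eq_two h (congrArg Subtype.val he), Or.inl ?_⟩
  rw [sum_sq_eq_E3]; exact h

theorem E6_symm (u v : Fin 3 → ℤ) : E6 u v = E6 v u := by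
  unfold E6
  rw [abs_sub_comm (emb u 0), abs_sub_comm (emb u 1), abs_sub_comm (emb u 2),
    abs_sub_comm (emb u 3), abs_sub_comm (emb u 4), abs_sub_comm (emb u 5)]

theorem E6_adj {u v : TOV} (h : truncatedOctahedronGraph.Adj u v) :
    E6 u.val v.val = 1 := by
  rw [truncatedOctahedronGraph, SimpleGraph.fromRel_adj] at h
  obtain ⟨hne, h | h⟩ := h <;> rw [sum_sq_eq_E3] at h
  · exact edgeE _ (mem_vertL u.2) _ (mem_vertL v.2) h
  · rw [E6_symm]
    exact edgeE _ (mem_vertL v.2) _ (mem_vertL u.2) h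

theorem walk_lower {u v : TOV} (p : truncatedOctahedronGraph.Walk u v) :
    E6 u.val v.val ≤ p.length := by
  induction p with
  | nil => simp [E6_self]
  | @cons a b c h q ih =>
    have h1 : E6 a.val b.val = 1 := E6_adj h
    have tri : E6 a.val c.val ≤ E6 a.val b.val + E6 b.val c.val := by
      unfold E6
      have t0 := abs_sub_le (emb a.val 0) (emb b.val 0) (emb c.val 0)
      have t1 := abs_sub_le (emb a.val 1) (emb b.val 1) (emb c.val 1)
      have t2 := abs_sub_le (emb a.val 2) (emb b.val 2) (emb c.val 2)
      have t3 := abs_sub_le (emb a.val 3) (emb b.val 3) (emb c.val 3)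
      have t4 := abs_sub_le (emb a.val 4) (emb b.val 4) (emb c.val 4)
      have t5 := abs_sub_le (emb a.val 5) (emb b.val 5) (emb c.val 5)
      omega
    rw [SimpleGraph.Walk.length_cons]
    push_cast
    omega

theorem exists_walk (n : ℕ) : ∀ u v : TOV, E6 u.val v.val = n →
    ∃ p : truncatedOctahedronGraph.Walk u v, p.length = n := by
  induction n using Nat.strong_induction_on with
  | _ n ih =>
    intro u v h
    rcases Nat.eq_zero_or_pos n with rfl | hpos
    · have : u = v := Subtype.ext (injE _ (mem_vertL u.2) _ (mem_vertL v.2) (by simpa using h))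
      subst this
      exact ⟨SimpleGraph.Walk.nil, rfl⟩
    · have hne : E6 u.val v.val ≠ 0 := by omega
      obtain ⟨w, hwL, hE3, hE6⟩ := stepE _ (mem_vertL u.2) _ (mem_vertL v.2) hne
      have hwV : TrOctaVertex w := vertL_trOcta w hwL
      set w' : TOV := ⟨w, hwV⟩
      have hadj : truncatedOctahedronGraph.Adj u w' := adj_of_E3 hE3
      have hEw : E6 w'.val v.val = (n - 1 : ℕ) := by
        have hn : (1:ℤ) ≤ n := by omega
        push_cast [Nat.cast_sub (by omega : 1 ≤ n)]
        have hww : E6 w'.val v.val = E6 w v.val := rfl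
        omega
      obtain ⟨p, hp⟩ := ih (n - 1) (by omega) w' v hEw
      refine ⟨SimpleGraph.Walk.cons hadj p, ?_⟩
      rw [SimpleGraph.Walk.length_cons, hp]
      omega

theorem dist_eq_E6 (u v : TOV) :
    (truncatedOctahedronGraph.dist u v : ℤ) = E6 u.val v.val := by
  set n : ℕ := (E6 u.val v.val).toNat with hn
  have hEn : E6 u.val v.val = n := (Int.toNat_of_nonneg (E6_nonneg _ _)).symm
  obtain ⟨p, hp⟩ := exists_walk n u v hEn
  have hle : truncatedOctahedronGraph.dist u v ≤ n := hp ▸ SimpleGraph.dist_le p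
  have hreach : truncatedOctahedronGraph.Reachable u v := ⟨p⟩
  obtain ⟨q, hq⟩ := hreach.exists_walk_length_eq_dist
  have hge := walk_lower q
  rw [hq] at hge
  omega

/-- The truncated octahedron graph embeds isometrically (scale 1) into
the hypercube `H_6 ⊆ ℤ^6` (all coordinates in `{0,1}`). -/
theorem truncatedOctahedron_embeds_hypercube :
    ∃ f : {v : Fin 3 → ℤ // TrOctaVertex v} → Fin 6 → ℤ,
      (∀ v i, f v i = 0 ∨ f v i = 1) ∧
      ∀ u v, (truncatedOctahedronGraph.dist u v : ℤ) = ∑ i, |f u i - f v i| := by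
  refine ⟨fun v => emb v.val, ?_, ?_⟩
  · have ifol : ∀ (c : Prop) [Decidable c], (if c then (1:ℤ) else 0) = 0 ∨
        (if c then (1:ℤ) else 0) = 1 := by
      intro c _; split <;> simp
    intro v i
    fin_cases i <;> exact ifol _
  · intro u v
    rw [sum_abs_eq_E6]
    exact dist_eq_E6 u v
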